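/- The generalized energy flow between two coherent states, ΔẼ := Ẽ(α_i) - Ẽ(α_f), satisfies ΔẼ = k_BT(|α_i|² - |α_f|²)(1 - e^{-2χ}), where Ẽ(α) = -k_BT·ln⟨α|e^{-H/k_BT}|α⟩ and H = ħω(N+1/2), χ = ħω/(2k_BT). -/

import Mathlib

open scoped Nat

/-- The effective potential Ẽ(α) = -k_BT ln⟨α|e^{-H/k_BT}|α⟩ for a coherent state `|α⟩`
and H = ħω(N+1/2), written via ⟨α|e^{-2χ(N+1/2)}|α⟩ = ∑ₙ e^{-|α|²}|α|^{2n}/n! · e^{-2χ(n+1/2)}. -/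
noncomputable def coherentEtilde (kT χ : ℝ) (α : ℂ) : ℝ :=
  -kT * Real.log (∑' n : ℕ,
    Real.exp (-(‖α‖ ^ 2)) * ‖α‖ ^ (2 * n) / (n ! : ℝ) *
      Real.exp (-2 * χ * ((n : ℝ) + 1 / 2)))

/-!
The photon number of a coherent state is Poisson distributed with mean |α|², so
⟨α|e^{-2χ(N+1/2)}|α⟩ = e^{-χ} E[(e^{-2χ})^N] is e^{-χ} times the Poisson generating function
at e^{-2χ}, namely exp(-χ - |α|²(1 - e^{-2χ})). Hence Ẽ(α) = k_BT (χ + |α|²(1 - e^{-2χ})) is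
affine in |α|², and the constant k_BT χ cancels in the difference.
-/

open Real

theorem hasSum_poisson_mul_pow (x r : ℝ) :
    HasSum (fun n : ℕ => exp (-x) * x ^ n / n ! * r ^ n) (exp (x * (r - 1))) := by
  have h := (NormedSpace.expSeries_div_hasSum_exp (x * r)).mul_left (exp (-x))
  rw [← Real.exp_eq_exp_ℝ, ← exp_add] at h
  rw [show x * (r - 1) = -x + x * r by ring]
  refine h.congr_fun fun n => ?_
  rw [mul_pow]
  ring

theorem hasSum_coherent_thermal_weight (χ : ℝ) (α : ℂ) :
    HasSum (fun n : ℕ => exp (-(‖α‖ ^ 2)) * ‖α‖ ^ (2 * n) / (n ! : ℝ) *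
        exp (-2 * χ * ((n : ℝ) + 1 / 2)))
      (exp (-(χ + ‖α‖ ^ 2 * (1 - exp (-2 * χ))))) := by
  have h := (hasSum_poisson_mul_pow (‖α‖ ^ 2) (exp (-2 * χ))).mul_left (exp (-χ))
  rw [← exp_add] at h
  rw [show -(χ + ‖α‖ ^ 2 * (1 - exp (-2 * χ))) = -χ + ‖α‖ ^ 2 * (exp (-2 * χ) - 1) by ring]
  refine h.congr_fun fun n => ?_
  rw [pow_mul, ← exp_nat_mul, show -2 * χ * ((n : ℝ) + 1 / 2) = -χ + n * (-2 * χ) by ring,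
    exp_add]
  ring

theorem coherentEtilde_eq (kT χ : ℝ) (α : ℂ) :
    coherentEtilde kT χ α = kT * (χ + ‖α‖ ^ 2 * (1 - exp (-2 * χ))) := by
  rw [coherentEtilde, (hasSum_coherent_thermal_weight χ α).tsum_eq, log_exp]
  ring

theorem coherent_energy_flow_general (kT χ : ℝ) (αi αf : ℂ) :
    coherentEtilde kT χ αi - coherentEtilde kT χ αf
      = kT * (‖αi‖ ^ 2 - ‖αf‖ ^ 2) * (1 - Real.exp (-2 * χ)) := by
  rw [coherentEtilde_eq, coherentEtilde_eq]
  ring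

/-- the generalized energy flow between coherent states,
ΔẼ = Ẽ(α_i) - Ẽ(α_f) = k_BT (|α_i|² - |α_f|²)(1 - e^{-2χ}), with χ = ħω/(2k_BT). -/
theorem coherent_energy_flow (hbarOmega kT χ : ℝ) (hw : 0 < hbarOmega) (hkT : 0 < kT)
    (hχ : χ = hbarOmega / (2 * kT)) (αi αf : ℂ) :
    coherentEtilde kT χ αi - coherentEtilde kT χ αf
      = kT * (‖αi‖ ^ 2 - ‖αf‖ ^ 2) * (1 - Real.exp (-2 * χ)) :=
  coherent_energy_flow_general kT χ αi αf
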